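/- Let z be an ℝⁿ-valued random vector satisfying E[exp(⟨v, z⟩)] ≤ exp(σ̂²‖v‖²/2) for all v ∈ ℝⁿ. Then for every λ with 0 < λ < 1/(2σ̂²), E[exp(λ‖z‖²)] ≤ (1 − 2σ̂²λ)^{−n/2}. -/

import Mathlib

/-! Gaussian averaging: for `b = 1 / (4 λ)` one has
`∫ exp (-b ‖v‖² + ⟪x, v⟫) dv = (π / b)^(n/2) · exp (λ ‖x‖²)`, so `E[exp (λ ‖z‖²)]` is a Gaussian
average of the moment generating function `E[exp ⟪v, z⟫]`. Bounding the latter by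
`exp (σ² ‖v‖² / 2)` leaves a Gaussian integral with parameter `b - σ²/2 = (1 - 2σ²λ) b`, and the
ratio of the two normalising constants is `(1 - 2σ²λ)^(-n/2)`. -/

open MeasureTheory Real
open scoped RealInnerProductSpace

section InnerProductSpace

variable {V : Type*} [NormedAddCommGroup V] [InnerProductSpace ℝ V]

lemma inner_le_sq_norm_div_add_mul_sq_norm {lam : ℝ} (hlam : 0 < lam) (v x : V) :
    ⟪v, x⟫ ≤ ‖v‖ ^ 2 / (4 * lam) + lam * ‖x‖ ^ 2 := by
  have hyoung : ‖v‖ * ‖x‖ ≤ ‖v‖ ^ 2 / (4 * lam) + lam * ‖x‖ ^ 2 := by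
    rw [div_add' _ _ _ (by positivity), le_div_iff₀ (by positivity)]
    nlinarith [sq_nonneg (‖v‖ - 2 * lam * ‖x‖)]
  exact (real_inner_le_norm v x).trans hyoung

lemma integrable_exp_inner_of_integrable_exp_mul_sq_norm {Ω : Type*} [MeasurableSpace Ω]
    {μ : Measure Ω} {X : Ω → V} (hX : AEStronglyMeasurable X μ) {lam : ℝ} (hlam : 0 < lam)
    (hint : Integrable (fun ω ↦ rexp (lam * ‖X ω‖ ^ 2)) μ) (v : V) :
    Integrable (fun ω ↦ rexp ⟪v, X ω⟫) μ := by
  refine (hint.const_mul (rexp (‖v‖ ^ 2 / (4 * lam)))).mono' (by fun_prop) (.of_forall fun ω ↦ ?_)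
  rw [norm_of_nonneg (exp_nonneg _), ← exp_add]
  exact exp_le_exp.mpr (inner_le_sq_norm_div_add_mul_sq_norm hlam v (X ω))

-- The factor `1 *` matches `GaussianFourier.integral_cexp_neg_mul_sq_norm_add` with `c = 1`.
lemma ofReal_exp_neg_mul_sq_norm_add_inner (b : ℝ) (w v : V) :
    (rexp (-b * ‖v‖ ^ 2 + ⟪w, v⟫) : ℂ) = Complex.exp (-b * ‖v‖ ^ 2 + 1 * ⟪w, v⟫) := by
  push_cast
  ring_nf

section FiniteDimensional

variable [FiniteDimensional ℝ V] [MeasurableSpace V] [BorelSpace V]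

lemma integrable_exp_neg_mul_sq_norm_add_inner {b : ℝ} (hb : 0 < b) (w : V) :
    Integrable fun v : V ↦ rexp (-b * ‖v‖ ^ 2 + ⟪w, v⟫) := by
  refine (GaussianFourier.integrable_cexp_neg_mul_sq_norm_add
    (show 0 < (b : ℂ).re from hb) 1 w).norm.congr (.of_forall fun v ↦ ?_)
  dsimp only
  rw [← ofReal_exp_neg_mul_sq_norm_add_inner, Complex.norm_real, norm_of_nonneg (exp_nonneg _)]

lemma integral_exp_neg_mul_sq_norm_add_inner {b : ℝ} (hb : 0 < b) (w : V) :
    ∫ v : V, rexp (-b * ‖v‖ ^ 2 + ⟪w, v⟫) =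
      (π / b) ^ (Module.finrank ℝ V / 2 : ℝ) * rexp (‖w‖ ^ 2 / (4 * b)) := by
  have h := GaussianFourier.integral_cexp_neg_mul_sq_norm_add (show 0 < (b : ℂ).re from hb) 1 w
  simp_rw [← ofReal_exp_neg_mul_sq_norm_add_inner, integral_complex_ofReal] at h
  rw [← Complex.ofReal_inj, h, ← Complex.ofReal_div, Complex.ofReal_mul,
    Complex.ofReal_cpow (by positivity)]
  push_cast
  ring_nf

lemma lintegral_exp_neg_mul_sq_norm_add_inner {b : ℝ} (hb : 0 < b) (w : V) :
    ∫⁻ v : V, ENNReal.ofReal (rexp (-b * ‖v‖ ^ 2 + ⟪w, v⟫)) =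
      ENNReal.ofReal ((π / b) ^ (Module.finrank ℝ V / 2 : ℝ) * rexp (‖w‖ ^ 2 / (4 * b))) := by
  rw [← integral_exp_neg_mul_sq_norm_add_inner hb, ofReal_integral_eq_lintegral_ofReal
    (integrable_exp_neg_mul_sq_norm_add_inner hb w) (.of_forall fun _ ↦ exp_nonneg _)]


lemma lintegral_exp_neg_inv_mul_sq_norm_add_inner {lam : ℝ} (hlam : 0 < lam) (x : V) :
    ∫⁻ v : V, ENNReal.ofReal (rexp (-(4 * lam)⁻¹ * ‖v‖ ^ 2 + ⟪x, v⟫)) =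
      ENNReal.ofReal ((4 * π * lam) ^ (Module.finrank ℝ V / 2 : ℝ)) *
        ENNReal.ofReal (rexp (lam * ‖x‖ ^ 2)) := by
  rw [lintegral_exp_neg_mul_sq_norm_add_inner (by positivity), ENNReal.ofReal_mul (by positivity)]
  congr 4 <;> field_simp

lemma lintegral_lintegral_exp_neg_mul_sq_norm_add_inner_le {Ω : Type*} [MeasurableSpace Ω]
    {μ : Measure Ω} [SFinite μ] {X : Ω → V} (hX : Measurable X) {σ b : ℝ}
    (hmgf : ∀ v, ∫⁻ ω, ENNReal.ofReal (rexp ⟪v, X ω⟫) ∂μ ≤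
      ENNReal.ofReal (rexp (σ ^ 2 * ‖v‖ ^ 2 / 2)))
    (hb : σ ^ 2 / 2 < b) :
    ∫⁻ ω, (∫⁻ v : V, ENNReal.ofReal (rexp (-b * ‖v‖ ^ 2 + ⟪X ω, v⟫))) ∂μ ≤
      ENNReal.ofReal ((π / (b - σ ^ 2 / 2)) ^ (Module.finrank ℝ V / 2 : ℝ)) := by
  have hmeas : Measurable (Function.uncurry fun ω (v : V) ↦
      ENNReal.ofReal (rexp (-b * ‖v‖ ^ 2 + ⟪X ω, v⟫))) := by
    fun_prop
  calc _ = ∫⁻ v, ∫⁻ ω, ENNReal.ofReal (rexp (-b * ‖v‖ ^ 2 + ⟪X ω, v⟫)) ∂μ :=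
        lintegral_lintegral_swap hmeas.aemeasurable
    _ = ∫⁻ v, ENNReal.ofReal (rexp (-b * ‖v‖ ^ 2)) * ∫⁻ ω, ENNReal.ofReal (rexp ⟪v, X ω⟫) ∂μ := by
      refine lintegral_congr fun v ↦ ?_
      rw [← lintegral_const_mul' _ _ ENNReal.ofReal_ne_top]
      refine lintegral_congr fun ω ↦ ?_
      rw [← ENNReal.ofReal_mul (exp_nonneg _), ← exp_add, real_inner_comm]
    _ ≤ ∫⁻ v, ENNReal.ofReal (rexp (-b * ‖v‖ ^ 2)) * ENNReal.ofReal (rexp (σ ^ 2 * ‖v‖ ^ 2 / 2)) :=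
      lintegral_mono fun v ↦ by gcongr; exact hmgf v
    _ = ∫⁻ v : V, ENNReal.ofReal (rexp (-(b - σ ^ 2 / 2) * ‖v‖ ^ 2 + ⟪0, v⟫)) := by
      refine lintegral_congr fun v ↦ ?_
      rw [← ENNReal.ofReal_mul (exp_nonneg _), ← exp_add, inner_zero_left]
      ring_nf
    _ = _ := by
      rw [lintegral_exp_neg_mul_sq_norm_add_inner (sub_pos.mpr hb)]
      simp

lemma lintegral_exp_mul_sq_norm_le {Ω : Type*} [MeasurableSpace Ω] {μ : Measure Ω} [SFinite μ]
    {X : Ω → V} (hX : Measurable X) {σ lam : ℝ}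
    (hmgf : ∀ v, ∫⁻ ω, ENNReal.ofReal (rexp ⟪v, X ω⟫) ∂μ ≤
      ENNReal.ofReal (rexp (σ ^ 2 * ‖v‖ ^ 2 / 2)))
    (hlam : 0 < lam) (hσlam : 2 * σ ^ 2 * lam < 1) :
    ∫⁻ ω, ENNReal.ofReal (rexp (lam * ‖X ω‖ ^ 2)) ∂μ ≤
      ENNReal.ofReal ((1 - 2 * σ ^ 2 * lam) ^ (-(Module.finrank ℝ V : ℝ) / 2)) := by
  set d : ℝ := Module.finrank ℝ V / 2
  have hσlam' : 0 < 1 - 2 * σ ^ 2 * lam := by linarith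
  have hb'_eq : (4 * lam)⁻¹ - σ ^ 2 / 2 = (1 - 2 * σ ^ 2 * lam) / (4 * lam) := by
    field_simp
    ring
  have hb : σ ^ 2 / 2 < (4 * lam)⁻¹ := sub_pos.mp (hb'_eq ▸ by positivity)
  have hK : 0 < (4 * π * lam) ^ d := by positivity
  have key : ENNReal.ofReal ((4 * π * lam) ^ d) * ∫⁻ ω, ENNReal.ofReal (rexp (lam * ‖X ω‖ ^ 2)) ∂μ
      ≤ ENNReal.ofReal ((π / ((4 * lam)⁻¹ - σ ^ 2 / 2)) ^ d) := by
    rw [← lintegral_const_mul' _ _ ENNReal.ofReal_ne_top]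
    refine (lintegral_congr fun ω ↦ ?_).trans_le
      (lintegral_lintegral_exp_neg_mul_sq_norm_add_inner_le hX hmgf hb)
    exact (lintegral_exp_neg_inv_mul_sq_norm_add_inner hlam (X ω)).symm
  have hratio : (π / ((4 * lam)⁻¹ - σ ^ 2 / 2)) ^ d / (4 * π * lam) ^ d =
      (1 - 2 * σ ^ 2 * lam) ^ (-(Module.finrank ℝ V : ℝ) / 2) := by
    rw [← div_rpow (by positivity) (by positivity), hb'_eq,
      show π / ((1 - 2 * σ ^ 2 * lam) / (4 * lam)) / (4 * π * lam) = (1 - 2 * σ ^ 2 * lam)⁻¹ by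
        field_simp,
      inv_rpow hσlam'.le, ← rpow_neg hσlam'.le, neg_div]
  rw [← hratio, ENNReal.ofReal_div_of_pos hK, ENNReal.le_div_iff_mul_le
    (.inl (ENNReal.ofReal_pos.mpr hK).ne') (.inl ENNReal.ofReal_ne_top), mul_comm]
  exact key

end FiniteDimensional

end InnerProductSpace

theorem stmt_9_general {Ω : Type*} [MeasurableSpace Ω] (μ : Measure Ω) [IsProbabilityMeasure μ]
    {n : ℕ} (z : Ω → EuclideanSpace ℝ (Fin n)) (hz : Measurable z) (σ : ℝ)
    (hsub : ∀ v : EuclideanSpace ℝ (Fin n),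
      ∫ ω, Real.exp ⟪v, z ω⟫ ∂μ ≤ Real.exp (σ ^ 2 * ‖v‖ ^ 2 / 2))
    (lam : ℝ) (hlam : 0 < lam) (hlam' : lam < 1 / (2 * σ ^ 2)) :
    ∫ ω, Real.exp (lam * ‖z ω‖ ^ 2) ∂μ ≤ (1 - 2 * σ ^ 2 * lam) ^ (-(n : ℝ) / 2) := by
  have hσlam : 2 * σ ^ 2 * lam < 1 := by
    rcases eq_or_ne σ 0 with rfl | hσ
    · simp
    · have := (lt_div_iff₀ (by positivity)).mp hlam'
      linarith
  -- `hsub` is vacuous for non-integrable `exp ⟪v, z⟫`; integrability comes from that of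
  -- `exp (λ ‖z‖²)`, and without the latter the left side is the junk value `0`.
  by_cases hint : Integrable (fun ω ↦ rexp (lam * ‖z ω‖ ^ 2)) μ
  · have hmgf : ∀ v, ∫⁻ ω, ENNReal.ofReal (rexp ⟪v, z ω⟫) ∂μ ≤
        ENNReal.ofReal (rexp (σ ^ 2 * ‖v‖ ^ 2 / 2)) := fun v ↦ by
      rw [← ofReal_integral_eq_lintegral_ofReal
        (integrable_exp_inner_of_integrable_exp_mul_sq_norm hz.aestronglyMeasurable hlam hint v)
        (.of_forall fun _ ↦ exp_nonneg _)]
      exact ENNReal.ofReal_le_ofReal (hsub v)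
    rw [integral_eq_lintegral_of_nonneg_ae (.of_forall fun _ ↦ exp_nonneg _)
      hint.aestronglyMeasurable]
    refine ENNReal.toReal_le_of_le_ofReal (by positivity) ?_
    simpa [finrank_euclideanSpace_fin] using lintegral_exp_mul_sq_norm_le hz hmgf hlam hσlam
  · rw [integral_undef hint]
    positivity

theorem stmt_9 {Ω : Type*} [MeasurableSpace Ω] (μ : Measure Ω) [IsProbabilityMeasure μ]
    {n : ℕ} (z : Ω → EuclideanSpace ℝ (Fin n)) (hz : Measurable z) (σ : ℝ) (hσ : 0 < σ)
    (hsub : ∀ v : EuclideanSpace ℝ (Fin n),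
      ∫ ω, Real.exp ⟪v, z ω⟫ ∂μ ≤ Real.exp (σ ^ 2 * ‖v‖ ^ 2 / 2))
    (lam : ℝ) (hlam : 0 < lam) (hlam' : lam < 1 / (2 * σ ^ 2)) :
    ∫ ω, Real.exp (lam * ‖z ω‖ ^ 2) ∂μ ≤ (1 - 2 * σ ^ 2 * lam) ^ (-(n : ℝ) / 2) :=
  stmt_9_general μ z hz σ hsub lam hlam hlam'
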